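/- Conversely, if the continuous-time positive system x' = Ax + Bu (A Metzler, B ≥ 0) is positively reachable on some interval [t₀,t₁], then A is diagonal and B contains an n×n monomial submatrix (in particular m ≥ n). -/

import Mathlib

/-!
Reaching `e l` forces the nonnegative integrand `F τ = exp ((t₁ - τ) • A) *ᵥ (B *ᵥ u τ)` to be
a positive multiple of `e l` at some `τ < t₁`: its coordinates other than `l` are nonnegative
with zero integral, and its `l`-th coordinate is not a.e. zero. For `s > 0` the matrix
`exp (s • A)` of a Metzler `A` is nonnegative with positive diagonal and vanishes off the
diagonal only where `A` does. So `w = B *ᵥ u τ ≥ 0` is itself a positive multiple of `e l`,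
column `l` of `exp (s • A)`, hence of `A`, vanishes off the diagonal, and some column of `B` is
a positive multiple of `e l`. Distinct `l` give distinct columns, whence `n ≤ m`.
-/

open scoped Matrix Classical
open MeasureTheory

attribute [local instance] Matrix.linftyOpNormedRing Matrix.linftyOpNormedAlgebra

/-- A nonnegative square matrix is monomial: each row and each column contains
exactly one strictly positive entry, all other entries being zero. -/
def IsMonomial {n : ℕ} (A : Matrix (Fin n) (Fin n) ℝ) : Prop :=
  (∀ i j, 0 ≤ A i j) ∧ (∀ i, ∃! j, 0 < A i j) ∧ (∀ j, ∃! i, 0 < A i j)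

open Matrix Filter

namespace Matrix

variable {ι : Type*} [Fintype ι] [DecidableEq ι]

theorem one_add_apply_le_exp_apply {M : Matrix ι ι ℝ} (hM : ∀ i j, 0 ≤ M i j) (i j : ι) :
    (1 + M) i j ≤ NormedSpace.exp M i j := by
  have hsum : HasSum (fun k : ℕ => ((k.factorial : ℝ)⁻¹ • M ^ k) i j) (NormedSpace.exp M i j) :=
    Pi.hasSum.1 (Pi.hasSum.1 (NormedSpace.exp_series_hasSum_exp' (𝕂 := ℝ) M) i) j
  have hterm (k : ℕ) : 0 ≤ ((k.factorial : ℝ)⁻¹ • M ^ k) i j :=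
    mul_nonneg (by positivity) (pow_apply_nonneg hM k i j)
  simpa [Finset.sum_range_succ] using sum_le_hasSum (Finset.range 2) (fun k _ => hterm k) hsum

theorem exp_add_smul_one (A : Matrix ι ι ℝ) (c : ℝ) :
    NormedSpace.exp (A + c • 1) = Real.exp c • NormedSpace.exp A := by
  rw [exp_add_of_commute _ _ ((Commute.one_right A).smul_right c), smul_one_eq_diagonal,
    exp_diagonal, Pi.exp_def, ← Real.exp_eq_exp_ℝ, ← smul_one_eq_diagonal, mul_smul_one]

def IsMetzler (A : Matrix ι ι ℝ) : Prop :=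
  ∀ i j, i ≠ j → 0 ≤ A i j

namespace IsMetzler

variable {A : Matrix ι ι ℝ} {s : ℝ}

theorem exists_add_smul_one_nonneg (hA : A.IsMetzler) :
    ∃ c : ℝ, ∀ i j, 0 ≤ (A + c • 1) i j := by
  refine ⟨∑ i, |A i i|, fun i j => ?_⟩
  rcases eq_or_ne i j with rfl | hij
  · have := Finset.single_le_sum (fun k _ => abs_nonneg (A k k)) (Finset.mem_univ i)
    simp only [add_apply, smul_apply, one_apply_eq, smul_eq_mul, mul_one]
    linarith [neg_abs_le (A i i)]
  · simpa [one_apply_ne hij] using hA i j hij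

theorem exists_one_add_smul_apply_le (hA : A.IsMetzler) (hs : 0 ≤ s) :
    ∃ c : ℝ, (∀ i j, 0 ≤ (A + c • 1) i j) ∧
      ∀ i j, (1 + s • (A + c • 1)) i j ≤ Real.exp (s * c) * NormedSpace.exp (s • A) i j := by
  obtain ⟨c, hc⟩ := hA.exists_add_smul_one_nonneg
  refine ⟨c, hc, fun i j => ?_⟩
  have hle := one_add_apply_le_exp_apply (M := s • (A + c • 1))
    (fun i j => mul_nonneg hs (hc i j)) i j
  rwa [smul_add s A, smul_smul, exp_add_smul_one, ← smul_smul, ← smul_add] at hle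

theorem exp_smul_apply_nonneg (hA : A.IsMetzler) (hs : 0 ≤ s) (i j : ι) :
    0 ≤ NormedSpace.exp (s • A) i j := by
  obtain ⟨c, hc, hle⟩ := hA.exists_one_add_smul_apply_le hs
  have h0 : 0 ≤ (1 + s • (A + c • 1)) i j :=
    add_nonneg (by rw [one_apply]; split_ifs <;> norm_num) (mul_nonneg hs (hc i j))
  exact (mul_nonneg_iff_of_pos_left (Real.exp_pos _)).1 (h0.trans (hle i j))

theorem exp_smul_apply_self_pos (hA : A.IsMetzler) (hs : 0 ≤ s) (i : ι) :
    0 < NormedSpace.exp (s • A) i i := by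
  obtain ⟨c, hc, hle⟩ := hA.exists_one_add_smul_apply_le hs
  have h1 : 1 ≤ (1 + s • (A + c • 1)) i i := by
    simpa [mul_add] using mul_nonneg hs (hc i i)
  exact (pos_iff_pos_of_mul_pos ((zero_lt_one.trans_le h1).trans_le (hle i i))).1 (Real.exp_pos _)

theorem apply_eq_zero_of_exp_smul_apply_eq_zero (hA : A.IsMetzler) (hs : 0 < s) {i j : ι}
    (hij : i ≠ j) (h : NormedSpace.exp (s • A) i j = 0) : A i j = 0 := by
  obtain ⟨c, -, hle⟩ := hA.exists_one_add_smul_apply_le hs.le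
  have : s * A i j ≤ 0 := by simpa [one_apply_ne hij, h] using hle i j
  exact le_antisymm (nonpos_of_mul_nonpos_right this hs) (hA i j hij)

end IsMetzler

end Matrix

def IsPosSMulSingle {ι : Type*} (l : ι) (x : ι → ℝ) : Prop :=
  (∀ i, i ≠ l → x i = 0) ∧ 0 < x l

namespace IsPosSMulSingle

variable {ι : Type*} {l l' : ι} {x : ι → ℝ}

theorem single [DecidableEq ι] {a : ℝ} (ha : 0 < a) : IsPosSMulSingle l (Pi.single l a) :=
  ⟨fun _ hi => by simp [hi], by simpa using ha⟩

theorem nonneg (hx : IsPosSMulSingle l x) (i : ι) : 0 ≤ x i := by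
  rcases eq_or_ne i l with rfl | hi
  exacts [hx.2.le, (hx.1 i hi).ge]

theorem eq_smul_single [DecidableEq ι] (hx : IsPosSMulSingle l x) :
    x = x l • Pi.single l (1 : ℝ) := by
  ext i
  rcases eq_or_ne i l with rfl | hi
  · simp
  · simp [hi, hx.1 i hi]

theorem unique (hx : IsPosSMulSingle l x) (hx' : IsPosSMulSingle l' x) : l = l' := by
  by_contra h
  exact (hx'.1 l h).not_gt hx.2

end IsPosSMulSingle

namespace Matrix

variable {ι κ : Type*} [Fintype κ] {M : Matrix ι κ ℝ} {w : κ → ℝ}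

theorem mulVec_apply_nonneg (hM : ∀ i j, 0 ≤ M i j) (hw : ∀ j, 0 ≤ w j) (i : ι) :
    0 ≤ (M *ᵥ w) i :=
  dotProduct_nonneg_of_nonneg (hM i) hw

theorem apply_mul_eq_zero_of_mulVec_apply_eq_zero {i : ι} (hM : ∀ j, 0 ≤ M i j)
    (hw : ∀ j, 0 ≤ w j) (h : (M *ᵥ w) i = 0) (j : κ) : M i j * w j = 0 :=
  (Finset.sum_eq_zero_iff_of_nonneg fun j _ => mul_nonneg (hM j) (hw j)).1 h j (Finset.mem_univ j)

theorem exists_col_isPosSMulSingle_of_mulVec {l : ι} (hM : ∀ i j, 0 ≤ M i j)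
    (hw : ∀ j, 0 ≤ w j) (h : IsPosSMulSingle l (M *ᵥ w)) :
    ∃ j, 0 < w j ∧ IsPosSMulSingle l (fun i => M i j) := by
  obtain ⟨j, -, hj⟩ :=
    (Finset.sum_pos_iff_of_nonneg fun j _ => mul_nonneg (hM l j) (hw j)).1 h.2
  have hwj : 0 < w j := pos_of_mul_pos_right hj (hM l j)
  refine ⟨j, hwj, fun i hi => ?_, pos_of_mul_pos_left hj (hw j)⟩
  exact (mul_eq_zero_iff_right hwj.ne').1
    (apply_mul_eq_zero_of_mulVec_apply_eq_zero (hM i) hw (h.1 i hi) j)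

theorem isPosSMulSingle_of_mulVec_of_diag_pos [Fintype ι] {E : Matrix ι ι ℝ} {w : ι → ℝ}
    {l : ι} (hE : ∀ i j, 0 ≤ E i j) (hdiag : ∀ i, 0 < E i i) (hw : ∀ j, 0 ≤ w j)
    (h : IsPosSMulSingle l (E *ᵥ w)) :
    IsPosSMulSingle l w ∧ IsPosSMulSingle l (fun i => E i l) := by
  obtain ⟨k, hwk, hcol⟩ := exists_col_isPosSMulSingle_of_mulVec hE hw h
  obtain rfl : k = l := by_contra fun hk => (hdiag k).ne' (hcol.1 k hk)
  refine ⟨⟨fun i hi => ?_, hwk⟩, hcol⟩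
  exact (mul_eq_zero_iff_left (hdiag i).ne').1
    (apply_mul_eq_zero_of_mulVec_apply_eq_zero (hE i) hw (h.1 i hi) i)

theorem IsMetzler.col_eq_zero_and_exists_isPosSMulSingle_col [Fintype ι] [DecidableEq ι]
    {A : Matrix ι ι ℝ} (hA : A.IsMetzler) {s : ℝ} (hs : 0 < s) {B : Matrix ι κ ℝ}
    (hB : ∀ i j, 0 ≤ B i j) {v : κ → ℝ} (hv : ∀ j, 0 ≤ v j) {l : ι}
    (h : IsPosSMulSingle l (NormedSpace.exp (s • A) *ᵥ (B *ᵥ v))) :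
    (∀ i, i ≠ l → A i l = 0) ∧ ∃ j, IsPosSMulSingle l (fun i => B i j) := by
  obtain ⟨hw, hcol⟩ := isPosSMulSingle_of_mulVec_of_diag_pos (hA.exp_smul_apply_nonneg hs.le)
    (hA.exp_smul_apply_self_pos hs.le) (mulVec_apply_nonneg hB hv) h
  obtain ⟨j, -, hj⟩ := exists_col_isPosSMulSingle_of_mulVec hB hv hw
  exact ⟨fun i hi => hA.apply_eq_zero_of_exp_smul_apply_eq_zero hs hi (hcol.1 i hi), j, hj⟩

end Matrix

namespace MeasureTheory

variable {ι : Type*} [Fintype ι] {l : ι}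

theorem frequently_isPosSMulSingle_of_integral {α : Type*} [MeasurableSpace α] {μ : Measure α}
    {F : α → ι → ℝ} (hF : Integrable F μ) (hF0 : ∀ᵐ a ∂μ, ∀ i, 0 ≤ F a i)
    (h : IsPosSMulSingle l (∫ a, F a ∂μ)) : ∃ᵐ a ∂μ, IsPosSMulSingle l (F a) := by
  have hcoord (i : ι) : ∫ a, F a i ∂μ = (∫ a, F a ∂μ) i := (eval_integral hF.eval i).symm
  have hoff : ∀ᵐ a ∂μ, ∀ i, i ≠ l → F a i = 0 := by
    refine ae_all_iff.2 fun i => eventually_imp_distrib_left.2 fun hi => ?_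
    refine (integral_eq_zero_iff_of_nonneg_ae (hF0.mono fun a ha => ha i) (hF.eval i)).1 ?_
    rw [hcoord, h.1 i hi]
  by_contra hnot
  have hl : (fun a => F a l) =ᵐ[μ] 0 := by
    filter_upwards [hoff, hF0, not_frequently.1 hnot] with a hoff hF0 hnot
    exact le_antisymm (not_lt.1 fun hpos => hnot ⟨hoff, hpos⟩) (hF0 l)
  have := h.2
  rw [← hcoord, integral_congr_ae hl, Pi.zero_def, integral_zero] at this
  exact this.false

theorem exists_mem_Ioo_isPosSMulSingle_of_intervalIntegral {F : ℝ → ι → ℝ} {t₀ t₁ : ℝ}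
    (ht : t₀ ≤ t₁) (hF : IntervalIntegrable F volume t₀ t₁)
    (hF0 : ∀ τ ∈ Set.Ioo t₀ t₁, ∀ i, 0 ≤ F τ i) (h : IsPosSMulSingle l (∫ τ in t₀..t₁, F τ)) :
    ∃ τ ∈ Set.Ioo t₀ t₁, IsPosSMulSingle l (F τ) := by
  rw [intervalIntegral.integral_of_le ht, integral_Ioc_eq_integral_Ioo] at h
  have hmem : ∀ᵐ τ ∂volume.restrict (Set.Ioo t₀ t₁), τ ∈ Set.Ioo t₀ t₁ :=
    ae_restrict_mem measurableSet_Ioo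
  have hfreq := frequently_isPosSMulSingle_of_integral (hF.1.mono_set Set.Ioo_subset_Ioc_self)
    (hmem.mono hF0) h
  obtain ⟨τ, hτ, hτmem⟩ := (hfreq.and_eventually hmem).exists
  exact ⟨τ, hτmem, hτ⟩

end MeasureTheory

theorem positive_reachability_implies_diagonal (n m : ℕ)
    (A : Matrix (Fin n) (Fin n) ℝ) (hA : ∀ i j, i ≠ j → 0 ≤ A i j)
    (B : Matrix (Fin n) (Fin m) ℝ) (hB : ∀ i j, 0 ≤ B i j)
    (t₀ t₁ : ℝ) (ht : t₀ < t₁)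
    (hreach : ∀ xbar : Fin n → ℝ, (∀ i, 0 ≤ xbar i) →
      ∃ u : ℝ → Fin m → ℝ, (∀ τ j, 0 ≤ u τ j) ∧
        IntervalIntegrable
          (fun τ => (NormedSpace.exp ((t₁ - τ) • A)).mulVec (B.mulVec (u τ)))
          volume t₀ t₁ ∧
        (∫ τ in t₀..t₁, (NormedSpace.exp ((t₁ - τ) • A)).mulVec (B.mulVec (u τ))) = xbar) :
    A.IsDiag ∧
      (∃ (f : Fin n → Fin m) (c : Fin n → ℝ), (∀ l, 0 < c l) ∧
        ∀ l, (fun p => B p (f l)) = c l • (Pi.single l 1 : Fin n → ℝ)) ∧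
      n ≤ m := by
  replace hA : A.IsMetzler := hA
  have key (l : Fin n) : (∀ i, i ≠ l → A i l = 0) ∧ ∃ j, IsPosSMulSingle l (fun i => B i j) := by
    have hl : IsPosSMulSingle l (Pi.single l (1 : ℝ)) := .single one_pos
    obtain ⟨u, hu, hint, heq⟩ := hreach _ hl.nonneg
    obtain ⟨τ, hτ, hpos⟩ := exists_mem_Ioo_isPosSMulSingle_of_intervalIntegral ht.le hint
      (fun τ hτ => mulVec_apply_nonneg (hA.exp_smul_apply_nonneg (sub_pos.2 hτ.2).le)
        (mulVec_apply_nonneg hB (hu τ))) (heq ▸ hl)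
    exact hA.col_eq_zero_and_exists_isPosSMulSingle_col (sub_pos.2 hτ.2) hB (hu τ) hpos
  choose hAcol f hf using key
  refine ⟨fun i j hij => hAcol j i hij,
    ⟨f, fun l => B l (f l), fun l => (hf l).2, fun l => (hf l).eq_smul_single⟩, ?_⟩
  simpa using Fintype.card_le_of_injective f fun a b hab => (hf a).unique (hab ▸ hf b)
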